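/- arXiv:2203.03494 — 2 statements merged into one kernel-verified Lean document; each statement's English description precedes it below -/
import Mathlib

section
/- Let p ≥ 3 be an odd integer and set M = (p+1)(p+3)/4 + 1. For every integer N ≥ M² − 2M + 2 there exists a real polynomial g ∈ ℝ[x₁,x₂,x₃] with non-negative coefficients such that g(x₁,x₂,x₃) = 1 whenever x₁ + x₂ + x₃ = 1, every triple (a,b,c) ∈ ℕ³ in the support of g satisfies p ∣ a + b + 2c, and the support of g has exactly N elements. -/
/-!
Write `p = 2m + 1`, `u = x₁ + x₂`, `v = x₃`. The Lucas-type identity `αᵖ + βᵖ = ∑ₖ cₖ uᵖ⁻²ᵏ vᵏ`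
(`α + β = u`, `αβ = -v`, all `cₖ > 0`) taken at `α = 1`, `β = -v` shows that
`B = ∑_{k ≤ m} cₖ (x₁ + x₂)ᵖ⁻²ᵏ x₃ᵏ`, which has `q = (m + 1)(m + 2)` invariant monomials, all with
positive coefficients, equals `1 - x₃ᵖ` on the plane `x₁ + x₂ + x₃ = 1`. Hence the stair
`x₃ⁱᵖ + ∑_{j < i} x₃ʲᵖ B` equals `1` there, and its shifted copies of `B` have disjoint supports.
Averaging the stairs over `i ∈ E = {0, …, t - 1, r}` gives rank `r q + t + 1` as long as `t ≤ r`;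
writing `N - 1 = r q + t` with `t < q`, the hypothesis `N - 1 ≥ q²` forces `q ≤ r`.
-/

open Finset MvPolynomial

section Lucas

/-- `lucasCoeff n k` is the coefficient of `u ^ (n - 2k) * v ^ k` in `αⁿ + βⁿ` expressed through
`u = α + β` and `v = -αβ`; for `n ≥ 1` and `2k ≤ n` it is the coefficient of `x ^ (n - 2k) * y ^ k`
in `f_{n,2}(x, y)`. -/
def lucasCoeff : ℕ → ℕ → ℕ
  | 0, 0 => 2
  | 0, _ + 1 => 0
  | 1, 0 => 1
  | 1, _ + 1 => 0
  | n + 2, 0 => lucasCoeff (n + 1) 0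
  | n + 2, k + 1 => lucasCoeff (n + 1) (k + 1) + lucasCoeff n k

theorem lucasCoeff_eq_zero_of_lt : ∀ {n k : ℕ}, n < 2 * k → lucasCoeff n k = 0
  | 0, 0, h | 1, 0, h | _ + 2, 0, h => by omega
  | 0, _ + 1, _ | 1, _ + 1, _ => rfl
  | n + 2, k + 1, h => by
    rw [lucasCoeff, lucasCoeff_eq_zero_of_lt (by omega), lucasCoeff_eq_zero_of_lt (by omega)]

theorem lucasCoeff_pos : ∀ {n k : ℕ}, 2 * k ≤ n → 0 < lucasCoeff n k
  | 0, 0, _ | 1, 0, _ => by decide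
  | n + 2, 0, _ => lucasCoeff_pos (n := n + 1) (by omega)
  | 0, _ + 1, h | 1, _ + 1, h => by omega
  | n + 2, k + 1, h => Nat.add_pos_right _ (lucasCoeff_pos (by omega))

variable {R : Type*}

def lucasSum [CommSemiring R] (n : ℕ) (u v : R) : R :=
  ∑ k ∈ range (n + 1), (lucasCoeff n k : R) * u ^ (n - 2 * k) * v ^ k

section CommSemiring

variable [CommSemiring R] (n : ℕ) (u v : R)

theorem lucasCoeff_mul_pow_mul (k : ℕ) :
    (lucasCoeff n k : R) * u ^ (n - 2 * k) * u = lucasCoeff n k * u ^ (n + 1 - 2 * k) := by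
  rcases le_or_gt (2 * k) n with h | h
  · rw [mul_assoc, ← pow_succ, Nat.sub_add_comm h]
  · simp [lucasCoeff_eq_zero_of_lt h]

theorem lucasSum_eq_sum_range_add_two :
    lucasSum n u v = ∑ k ∈ range (n + 1 + 1), (lucasCoeff n k : R) * u ^ (n - 2 * k) * v ^ k := by
  rw [lucasSum, sum_range_succ _ (n + 1), lucasCoeff_eq_zero_of_lt (by omega)]
  simp

theorem lucasSum_add_two :
    lucasSum (n + 2) u v = u * lucasSum (n + 1) u v + v * lucasSum n u v := by
  have step : ∀ k, (lucasCoeff (n + 2) (k + 1) : R) * u ^ (n + 2 - 2 * (k + 1)) * v ^ (k + 1) =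
      u * (lucasCoeff (n + 1) (k + 1) * u ^ (n + 1 - 2 * (k + 1)) * v ^ (k + 1)) +
        v * (lucasCoeff n k * u ^ (n - 2 * k) * v ^ k) := fun k => by
    have h := lucasCoeff_mul_pow_mul (n + 1) u (k + 1)
    rw [show n + 1 + 1 - 2 * (k + 1) = n - 2 * k by omega] at h
    rw [lucasCoeff, show n + 2 - 2 * (k + 1) = n - 2 * k by omega, Nat.cast_add, add_mul, ← h]
    ring
  rw [lucasSum, sum_range_succ', sum_congr rfl fun k _ => step k, sum_add_distrib, ← mul_sum,
    ← mul_sum, lucasSum_eq_sum_range_add_two n, lucasSum_eq_sum_range_add_two (n + 1),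
    sum_range_succ' _ (n + 1 + 1), lucasCoeff]
  simp only [mul_zero, Nat.sub_zero, pow_zero, mul_one, pow_succ]
  ring

end CommSemiring

theorem lucasSum_of_add_eq_one [CommRing R] {u v : R} (h : u + v = 1) :
    ∀ n, lucasSum n u v = 1 + (-v) ^ n
  | 0 => by norm_num [lucasSum, lucasCoeff, one_add_one_eq_two]
  | 1 => by
    simp only [lucasSum, sum_range_succ, lucasCoeff]
    linear_combination h
  | n + 2 => by
    rw [lucasSum_add_two, lucasSum_of_add_eq_one h (n + 1), lucasSum_of_add_eq_one h n]
    linear_combination (1 + (-v) ^ (n + 1)) * h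

end Lucas

section Support

variable {σ ι R : Type*} [CommSemiring R] [PartialOrder R] [IsOrderedCancelAddMonoid R]

theorem MvPolynomial.coeff_sum_monomial_nonneg (s : Finset ι) (e : ι → σ →₀ ℕ) (w : ι → R)
    (hw : ∀ i ∈ s, 0 ≤ w i) (α : σ →₀ ℕ) : 0 ≤ coeff α (∑ i ∈ s, monomial (e i) (w i)) := by
  classical
  rw [coeff_sum]
  refine sum_nonneg fun i hi => ?_
  rw [coeff_monomial]
  split_ifs
  exacts [hw i hi, le_rfl]

theorem MvPolynomial.support_sum_monomial_of_pos [DecidableEq σ] (s : Finset ι) (e : ι → σ →₀ ℕ)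
    (w : ι → R) (hw : ∀ i ∈ s, 0 < w i) :
    (∑ i ∈ s, monomial (e i) (w i)).support = s.image e := by
  ext α
  simp only [mem_support_iff, coeff_sum, coeff_monomial, ← sum_filter, mem_image]
  constructor
  · intro h
    obtain ⟨i, hi⟩ := nonempty_of_sum_ne_zero h
    exact ⟨i, (mem_filter.1 hi).1, (mem_filter.1 hi).2⟩
  · rintro ⟨i, hi, rfl⟩
    refine (sum_pos (fun j hj => hw j (mem_filter.1 hj).1) ⟨i, ?_⟩).ne'
    exact mem_filter.2 ⟨hi, rfl⟩

end Support

section Block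

variable (m : ℕ)

/-- `⟨k, (a, b)⟩` stands for the monomial `x₁ ^ a * x₂ ^ b * x₃ ^ k` of
`B = f_{2m+1,2}(x₁ + x₂, x₃) - x₃ ^ (2m + 1)`. -/
def blockIndex : Finset (Σ _ : ℕ, ℕ × ℕ) :=
  (range (m + 1)).sigma fun k => antidiagonal (2 * m + 1 - 2 * k)

theorem card_blockIndex : #(blockIndex m) = (m + 1) * (m + 2) := by
  rw [blockIndex, card_sigma]
  have gauss : ∀ n, ∑ k ∈ range n, (2 * k + 2) = n * (n + 1) := fun n => by
    induction n with
    | zero => rfl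
    | succ n ih => rw [sum_range_succ, ih]; ring
  simp only [Nat.card_antidiagonal]
  rw [← sum_range_reflect, ← gauss]
  exact sum_congr rfl fun k hk => by simp only [mem_range] at hk; omega

def blockCoeff (y : Σ _ : ℕ, ℕ × ℕ) : ℕ :=
  lucasCoeff (2 * m + 1) y.1 * (2 * m + 1 - 2 * y.1).choose y.2.1

variable {m}

theorem mem_blockIndex {y : Σ _ : ℕ, ℕ × ℕ} :
    y ∈ blockIndex m ↔ y.1 ≤ m ∧ y.2.1 + y.2.2 + 2 * y.1 = 2 * m + 1 := by
  rw [blockIndex, mem_sigma, mem_range, HasAntidiagonal.mem_antidiagonal]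
  omega

theorem blockCoeff_pos {y : Σ _ : ℕ, ℕ × ℕ} (hy : y ∈ blockIndex m) : 0 < blockCoeff m y := by
  rw [mem_blockIndex] at hy
  exact Nat.mul_pos (lucasCoeff_pos (by omega)) (Nat.choose_pos (by omega))

theorem sum_blockCoeff_mul {R : Type*} [CommRing R] {x₁ x₂ x₃ : R} (hx : x₁ + x₂ + x₃ = 1) :
    ∑ y ∈ blockIndex m, (blockCoeff m y : R) * (x₁ ^ y.2.1 * x₂ ^ y.2.2 * x₃ ^ y.1) =
      1 - x₃ ^ (2 * m + 1) := by
  have hblock : ∀ k, ∑ ab ∈ antidiagonal (2 * m + 1 - 2 * k),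
      (blockCoeff m ⟨k, ab⟩ : R) * (x₁ ^ ab.1 * x₂ ^ ab.2 * x₃ ^ k) =
        lucasCoeff (2 * m + 1) k * (1 - x₃) ^ (2 * m + 1 - 2 * k) * x₃ ^ k := fun k => by
    rw [← show x₁ + x₂ = 1 - x₃ by linear_combination hx, (Commute.all x₁ x₂).add_pow', mul_sum,
      sum_mul]
    refine sum_congr rfl fun ab _ => ?_
    simp only [blockCoeff, nsmul_eq_mul, Nat.cast_mul]
    ring
  rw [blockIndex, sum_sigma, sum_congr rfl fun k _ => hblock k]
  have lucas := lucasSum_of_add_eq_one (sub_add_cancel 1 x₃) (2 * m + 1)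
  rw [lucasSum, Odd.neg_pow ⟨m, rfl⟩] at lucas
  rw [sum_subset (range_subset_range.2 (by omega : m + 1 ≤ 2 * m + 1 + 1))]
  · linear_combination lucas
  intro k _ hk
  rw [lucasCoeff_eq_zero_of_lt (by simp only [mem_range, not_lt] at hk; omega), Nat.cast_zero, zero_mul, zero_mul]

end Block

section Stair

noncomputable def exponent3 (a b c : ℕ) : Fin 3 →₀ ℕ := Finsupp.equivFunOnFinite.symm ![a, b, c]

theorem exponent3_inj {a b c a' b' c' : ℕ} :
    exponent3 a b c = exponent3 a' b' c' ↔ a = a' ∧ b = b' ∧ c = c' := by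
  simp [exponent3, ← List.ofFn_inj, List.ofFn_succ]

theorem eval_monomial_exponent3 {R : Type*} [CommSemiring R] (x : Fin 3 → R) (w : R)
    (a b c : ℕ) : eval x (monomial (exponent3 a b c) w) = w * (x 0 ^ a * x 1 ^ b * x 2 ^ c) := by
  rw [eval_monomial, Finsupp.prod_fintype _ _ fun _ => pow_zero _, Fin.prod_univ_three]
  simp [exponent3]

abbrev StairIndex := (ℕ × Σ _ : ℕ, ℕ × ℕ) ⊕ ℕ

variable (m : ℕ)

noncomputable def stairExponent : StairIndex → Fin 3 →₀ ℕ
  | .inl x => exponent3 x.2.2.1 x.2.2.2 (x.1 * (2 * m + 1) + x.2.1)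
  | .inr i => exponent3 0 0 (i * (2 * m + 1))

def stairCoeff : StairIndex → ℕ
  | .inl x => blockCoeff m x.2
  | .inr _ => 1

/-- The monomials of `x₃ ^ (i p) + ∑_{j < i} x₃ ^ (j p) B`, `p = 2m + 1`. -/
def stairIndex (i : ℕ) : Finset StairIndex := (range i ×ˢ blockIndex m).disjSum {i}

noncomputable def stairPoly {R : Type*} [CommSemiring R] (i : ℕ) : MvPolynomial (Fin 3) R :=
  ∑ x ∈ stairIndex m i, monomial (stairExponent m x) (stairCoeff m x : R)

variable {m}

theorem eval_stairPoly {R : Type*} [CommRing R] {x : Fin 3 → R} (hx : x 0 + x 1 + x 2 = 1)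
    (i : ℕ) : eval x (stairPoly m i) = 1 := by
  have hlayer : ∀ j, ∑ y ∈ blockIndex m,
      (blockCoeff m y : R) * (x 0 ^ y.2.1 * x 1 ^ y.2.2 * x 2 ^ (j * (2 * m + 1) + y.1)) =
        (1 - x 2 ^ (2 * m + 1)) * (x 2 ^ (2 * m + 1)) ^ j := fun j => by
    rw [← sum_blockCoeff_mul hx, sum_mul]
    refine sum_congr rfl fun y _ => ?_
    rw [pow_add, mul_comm j, pow_mul]
    ring
  rw [stairPoly, map_sum]
  simp only [stairIndex, sum_disjSum, sum_product, sum_singleton,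
    stairExponent, stairCoeff, eval_monomial_exponent3, Nat.cast_one]
  rw [sum_congr rfl fun j _ => hlayer j, ← mul_sum, mul_neg_geom_sum, mul_comm i, pow_mul]
  ring

theorem stairCoeff_pos {s t : Finset ℕ} {x : StairIndex} (hx : x ∈ (s ×ˢ blockIndex m).disjSum t) :
    0 < stairCoeff m x := by
  rcases x with x | _
  · exact blockCoeff_pos (mem_product.1 (inl_mem_disjSum.1 hx)).2
  · exact Nat.one_pos

theorem dvd_stairExponent {s t : Finset ℕ} {x : StairIndex}
    (hx : x ∈ (s ×ˢ blockIndex m).disjSum t) :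
    2 * m + 1 ∣ stairExponent m x 0 + stairExponent m x 1 + 2 * stairExponent m x 2 := by
  rcases x with ⟨j, y⟩ | i
  · have hy := (mem_blockIndex.1 (mem_product.1 (inl_mem_disjSum.1 hx)).2).2
    exact ⟨2 * j + 1, show y.2.1 + y.2.2 + 2 * (j * (2 * m + 1) + y.1) = _ by linarith⟩
  · exact ⟨2 * i, show 0 + 0 + 2 * (i * (2 * m + 1)) = _ by ring⟩

theorem Nat.eq_of_mul_add_eq_mul_add {p j j' k k' : ℕ} (hk : k < p) (hk' : k' < p)
    (h : j * p + k = j' * p + k') : j = j' ∧ k = k' := by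
  have hp : 0 < p := by omega
  obtain ⟨hj, hk⟩ := (Nat.div_mod_unique (a := j * p + k) (d := j) hp).2 ⟨by ring, hk⟩
  obtain ⟨hj', hk'⟩ := (Nat.div_mod_unique (a := j' * p + k') (d := j') hp).2 ⟨by ring, hk'⟩
  rw [h] at hj hk
  exact ⟨hj.symm.trans hj', hk.symm.trans hk'⟩

theorem injOn_stairExponent (s t : Finset ℕ) :
    Set.InjOn (stairExponent m) ((s ×ˢ blockIndex m).disjSum t) := by
  rintro (⟨j, k, a, b⟩ | i) hx (⟨j', k', a', b'⟩ | i') hx' h <;>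
    simp only [stairExponent, exponent3_inj] at h
  · have hy := mem_blockIndex.1 (mem_product.1 (inl_mem_disjSum.1 hx)).2
    have hy' := mem_blockIndex.1 (mem_product.1 (inl_mem_disjSum.1 hx')).2
    simp only at hy hy'
    obtain ⟨rfl, rfl, hc⟩ := h
    obtain ⟨rfl, rfl⟩ := Nat.eq_of_mul_add_eq_mul_add (by omega) (by omega) hc
    rfl
  · have hy := mem_blockIndex.1 (mem_product.1 (inl_mem_disjSum.1 hx)).2
    simp only at hy
    omega
  · have hy' := mem_blockIndex.1 (mem_product.1 (inl_mem_disjSum.1 hx')).2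
    simp only at hy'
    omega
  · rw [Nat.eq_of_mul_eq_mul_right (by omega) h.2.2]

end Stair

section Average

variable (m : ℕ)

noncomputable def averagedStair (E : Finset ℕ) : MvPolynomial (Fin 3) ℝ :=
  (#E : ℝ)⁻¹ • ∑ i ∈ E, stairPoly m i

variable {m} {E : Finset ℕ}

theorem averagedStair_eq_sum_monomial :
    averagedStair m E = ∑ x ∈ E.sigma (stairIndex m),
      monomial (stairExponent m x.2) ((#E : ℝ)⁻¹ * stairCoeff m x.2) := by
  simp only [averagedStair, stairPoly, sum_sigma, smul_sum, smul_monomial, smul_eq_mul]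

theorem coeff_averagedStair_nonneg (α : Fin 3 →₀ ℕ) : 0 ≤ coeff α (averagedStair m E) := by
  rw [averagedStair_eq_sum_monomial]
  exact coeff_sum_monomial_nonneg _ _ _ (fun _ _ => by positivity) α

theorem eval_averagedStair (hE : E.Nonempty) {x : Fin 3 → ℝ} (hx : x 0 + x 1 + x 2 = 1) :
    eval x (averagedStair m E) = 1 := by
  rw [averagedStair, smul_eval, map_sum, sum_congr rfl fun i _ => eval_stairPoly hx i, sum_const,
    nsmul_one, inv_mul_cancel₀ (by simpa using hE.ne_empty)]

theorem image_snd_sigma_stairIndex {r : ℕ} (hr : r ∈ E) (hle : ∀ i ∈ E, i ≤ r) :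
    (E.sigma (stairIndex m)).image Sigma.snd = (range r ×ˢ blockIndex m).disjSum E := by
  ext (⟨j, y⟩ | i)
  · simp only [mem_image, mem_sigma, stairIndex, Sigma.exists, exists_eq_right, inl_mem_disjSum,
      mem_product, mem_range]
    exact ⟨fun ⟨i, hi, hj, hy⟩ => ⟨(hj.trans_le (hle i hi)), hy⟩, fun ⟨hj, hy⟩ => ⟨r, hr, hj, hy⟩⟩
  · simp [stairIndex]

theorem support_averagedStair_eq_image_sigma :
    (averagedStair m E).support = (E.sigma (stairIndex m)).image fun x => stairExponent m x.2 := by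
  rw [averagedStair_eq_sum_monomial, support_sum_monomial_of_pos]
  rintro ⟨i, x⟩ hx
  have hE : 0 < #E := card_pos.2 ⟨i, (mem_sigma.1 hx).1⟩
  have := stairCoeff_pos (mem_sigma.1 hx).2
  positivity

theorem support_averagedStair {r : ℕ} (hr : r ∈ E) (hle : ∀ i ∈ E, i ≤ r) :
    (averagedStair m E).support = ((range r ×ˢ blockIndex m).disjSum E).image (stairExponent m) := by
  rw [support_averagedStair_eq_image_sigma, ← image_snd_sigma_stairIndex hr hle, image_image]
  rfl

theorem dvd_of_mem_support_averagedStair {α : Fin 3 →₀ ℕ} (hα : α ∈ (averagedStair m E).support) :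
    2 * m + 1 ∣ α 0 + α 1 + 2 * α 2 := by
  rw [support_averagedStair_eq_image_sigma, mem_image] at hα
  obtain ⟨x, hx, rfl⟩ := hα
  exact dvd_stairExponent (mem_sigma.1 hx).2

theorem card_support_averagedStair {r : ℕ} (hr : r ∈ E) (hle : ∀ i ∈ E, i ≤ r) :
    #(averagedStair m E).support = r * ((m + 1) * (m + 2)) + #E := by
  rw [support_averagedStair hr hle, card_image_of_injOn (injOn_stairExponent _ _), card_disjSum,
    card_product, card_range, card_blockIndex]

end Average

theorem stmt_14_general (p : ℕ) (hodd : Odd p) (N : ℕ)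
    (hN : ((p + 1) * (p + 3) / 4 + 1) ^ 2 - 2 * ((p + 1) * (p + 3) / 4 + 1) + 2 ≤ N) :
    ∃ g : MvPolynomial (Fin 3) ℝ,
      (∀ α, 0 ≤ g.coeff α) ∧
      (∀ x₁ x₂ x₃ : ℝ, x₁ + x₂ + x₃ = 1 → eval ![x₁, x₂, x₃] g = 1) ∧
      (∀ α ∈ g.support, p ∣ α 0 + α 1 + 2 * α 2) ∧
      g.support.card = N := by
  obtain ⟨m, rfl⟩ := hodd
  set q := (m + 1) * (m + 2) with hq
  have hM : (2 * m + 1 + 1) * (2 * m + 1 + 3) / 4 = q := by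
    rw [show (2 * m + 1 + 1) * (2 * m + 1 + 3) = 4 * q by ring, Nat.mul_div_cancel_left _ four_pos]
  have hqN : q * q + 1 ≤ N := by
    rw [hM] at hN
    have : (q + 1) ^ 2 = q * q + 2 * q + 1 := by ring
    omega
  obtain ⟨r, t, hNrt, htq⟩ : ∃ r t, N - 1 = q * r + t ∧ t < q :=
    ⟨_, _, (Nat.div_add_mod _ _).symm, Nat.mod_lt _ (by positivity)⟩
  have htr : t ≤ r := by
    have : q * q < q * (r + 1) := by rw [mul_add]; omega
    have := Nat.lt_of_mul_lt_mul_left this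
    omega
  set E := insert r (range t)
  have hEr : ∀ i ∈ E, i ≤ r := fun i hi => by
    rcases mem_insert.1 hi with rfl | hi
    exacts [le_rfl, (mem_range.1 hi).le.trans htr]
  refine ⟨averagedStair m E, coeff_averagedStair_nonneg,
    fun x₁ x₂ x₃ hx => eval_averagedStair (insert_nonempty _ _) hx,
    fun α => dvd_of_mem_support_averagedStair, ?_⟩
  rw [card_support_averagedStair (mem_insert_self r _) hEr,
    card_insert_of_notMem (by simpa using htr), card_range, ← hq, mul_comm]
  omega

/-- Gap termination for `⟨ωI₂ ⊕ ω²I₁⟩`, `ω` a primitive `p`-th root of unity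
(`p` odd): with `M = (p+1)(p+3)/4 + 1` the rank of `f_{p,2}(x₁+x₂, x₃)`, every
`N ≥ M² − 2M + 2` is realized as the rank of an invariant polynomial with
non-negative coefficients equal to `1` on the hyperplane `x₁ + x₂ + x₃ = 1`. -/
theorem stmt_14 (p : ℕ) (hp : 3 ≤ p) (hodd : Odd p) (N : ℕ)
    (hN : ((p + 1) * (p + 3) / 4 + 1) ^ 2 - 2 * ((p + 1) * (p + 3) / 4 + 1) + 2 ≤ N) :
    ∃ g : MvPolynomial (Fin 3) ℝ,
      (∀ α, 0 ≤ g.coeff α) ∧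
      (∀ x₁ x₂ x₃ : ℝ, x₁ + x₂ + x₃ = 1 → eval ![x₁, x₂, x₃] g = 1) ∧
      (∀ α ∈ g.support, p ∣ α 0 + α 1 + 2 * α 2) ∧
      g.support.card = N :=
  stmt_14_general p hodd N hN
end

section
/- Let p ≥ 3 be an odd integer and set M = (p+1)(p+3)/8 + p + 1. For every integer N ≥ M² − 2M + 2 there exists a real polynomial g ∈ ℝ[x₁,x₂,x₃] with non-negative coefficients such that g(x₁,x₂,x₃) = 1 whenever x₁ + x₂ + x₃ = 1, every triple (a,b,c) ∈ ℕ³ in the support of g satisfies p ∣ a + 2b + 2c, and the support of g has exactly N elements. -/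
/-!
Let `B = f_{p,2}(x₁, x₂ + x₃) - x₁^p`. It has non-negative coefficients, equals `1 - x₁^p` on
the plane `x₁ + x₂ + x₃ = 1`, and its `r = M - 1` monomials have `x₁`-degree `< p` and involve
`x₂` or `x₃`. By telescoping, every tower `x₁^(mp) + ∑_{i<m} x₁^(ip) B` equals `1` on the plane,
and so does the mean of the towers over `T = {0, …, b-1} ∪ {n}`. Since all coefficients are
non-negative, the support of this mean is the union of the supports, namely the monomials
`x₁^(mp)` (`m ∈ T`) together with the shifted copies `x₁^(ip) · supp B` (`i < n`), and the degree
conditions on `B` make this union disjoint. Hence the rank is `b + 1 + n r`. Once `N > r²`, one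
can write `N - 1 = n r + b` with `b < r ≤ n`, and `r² + 1 = M² - 2M + 2`.
-/

open MvPolynomial Finset.HasAntidiagonal

noncomputable section

section NonnegCoeffs
variable {σ R : Type*} [CommSemiring R] [PartialOrder R] [IsOrderedRing R]

variable (σ R) in
def nonnegCoeffs : Subsemiring (MvPolynomial σ R) where
  carrier := {f | ∀ α, 0 ≤ coeff α f}
  mul_mem' {f g} hf hg α := by
    classical
    rw [coeff_mul]
    exact Finset.sum_nonneg fun x _ => mul_nonneg (hf _) (hg _)
  one_mem' α := by
    classical
    rw [coeff_one]
    split_ifs <;> simp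
  add_mem' {f g} hf hg α := by
    rw [coeff_add]
    exact add_nonneg (hf α) (hg α)
  zero_mem' α := by simp

lemma monomial_mem_nonnegCoeffs (d : σ →₀ ℕ) {c : R} (hc : 0 ≤ c) :
    monomial d c ∈ nonnegCoeffs σ R := fun α => by
  classical
  rw [coeff_monomial]
  split_ifs <;> simp [hc]

lemma X_mem_nonnegCoeffs (i : σ) : X i ∈ nonnegCoeffs σ R :=
  monomial_mem_nonnegCoeffs _ zero_le_one

lemma support_sum_of_mem_nonnegCoeffs {ι : Type*} [DecidableEq σ] (s : Finset ι)
    {f : ι → MvPolynomial σ R} (hf : ∀ i ∈ s, f i ∈ nonnegCoeffs σ R) :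
    (∑ i ∈ s, f i).support = s.biUnion fun i => (f i).support := by
  ext α
  simp only [mem_support_iff, coeff_sum, Finset.mem_biUnion, ne_eq,
    Finset.sum_eq_zero_iff_of_nonneg fun i hi => hf i hi α, not_forall, exists_prop]

lemma support_add_of_mem_nonnegCoeffs [DecidableEq σ] {f g : MvPolynomial σ R}
    (hf : f ∈ nonnegCoeffs σ R) (hg : g ∈ nonnegCoeffs σ R) :
    (f + g).support = f.support ∪ g.support := by
  ext α
  simp only [mem_support_iff, coeff_add, Finset.mem_union, ne_eq,
    add_eq_zero_iff_of_nonneg (hf α) (hg α), not_and_or]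

end NonnegCoeffs

section Support
variable {σ R : Type*} [CommSemiring R]

lemma mem_support_X_mul_iff [DecidableEq σ] {i : σ} {f : MvPolynomial σ R} {α : σ →₀ ℕ} :
    α ∈ (X i * f).support ↔ α i ≠ 0 ∧ α - Finsupp.single i 1 ∈ f.support := by
  simp only [mem_support_iff, coeff_X_mul', Finsupp.mem_support_iff]
  split_ifs with h <;> simp [h]

lemma mem_support_X_add_X_mul_iff [DecidableEq σ] [PartialOrder R] [IsOrderedRing R] {i j : σ}
    {f : MvPolynomial σ R} (hf : f ∈ nonnegCoeffs σ R) {α : σ →₀ ℕ} :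
    α ∈ ((X i + X j) * f).support ↔
      α i ≠ 0 ∧ α - Finsupp.single i 1 ∈ f.support ∨
        α j ≠ 0 ∧ α - Finsupp.single j 1 ∈ f.support := by
  rw [add_mul, support_add_of_mem_nonnegCoeffs (mul_mem (X_mem_nonnegCoeffs i) hf)
    (mul_mem (X_mem_nonnegCoeffs j) hf), Finset.mem_union, mem_support_X_mul_iff,
    mem_support_X_mul_iff]

lemma support_monomial_one_mul (d : σ →₀ ℕ) (f : MvPolynomial σ R) :
    (monomial d 1 * f).support = f.support.map (addLeftEmbedding d) := by
  classical
  ext α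
  simp only [Finset.mem_map, mem_support_iff, coeff_monomial_mul', one_mul, addLeftEmbedding_apply]
  constructor
  · intro h
    split_ifs at h with hd
    · exact ⟨α - d, h, add_tsub_cancel_of_le hd⟩
    · exact absurd rfl h
  · rintro ⟨β, hβ, rfl⟩
    simpa using hβ


end Support

section Erase
variable {σ R : Type*} [CommRing R] (f : MvPolynomial σ R) (d : σ →₀ ℕ)

lemma coeff_sub_monomial_coeff [DecidableEq σ] (α : σ →₀ ℕ) :
    coeff α (f - monomial d (coeff d f)) = if α = d then 0 else coeff α f := by
  rw [coeff_sub, coeff_monomial]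
  split_ifs with h₁ h₂ h₂ <;> simp_all [eq_comm]

lemma support_sub_monomial_coeff [DecidableEq σ] :
    (f - monomial d (coeff d f)).support = f.support.erase d := by
  ext α
  rw [Finset.mem_erase, mem_support_iff, mem_support_iff, coeff_sub_monomial_coeff]
  split_ifs <;> simp_all

lemma sub_monomial_coeff_mem_nonnegCoeffs [PartialOrder R] [IsOrderedRing R]
    (hf : f ∈ nonnegCoeffs σ R) : f - monomial d (coeff d f) ∈ nonnegCoeffs σ R := fun α => by
  classical
  rw [coeff_sub_monomial_coeff]
  split_ifs
  exacts [le_rfl, hf α]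

end Erase

section Tower
variable {σ R : Type*}

def tower [CommSemiring R] (u B : MvPolynomial σ R) (m : ℕ) : MvPolynomial σ R :=
  u ^ m + ∑ i ∈ Finset.range m, u ^ i * B

lemma eval_tower [CommRing R] {u B : MvPolynomial σ R} {v : σ → R}
    (h : eval v B = 1 - eval v u) (m : ℕ) : eval v (tower u B m) = 1 := by
  simp only [tower, map_add, map_pow, map_sum, map_mul, h, ← Finset.sum_mul, geom_sum_mul_neg]
  ring

variable [CommSemiring R] [PartialOrder R] [IsOrderedRing R]

lemma tower_mem_nonnegCoeffs {u B : MvPolynomial σ R} (hu : u ∈ nonnegCoeffs σ R)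
    (hB : B ∈ nonnegCoeffs σ R) (m : ℕ) : tower u B m ∈ nonnegCoeffs σ R :=
  add_mem (pow_mem hu m) (sum_mem fun i _ => mul_mem (pow_mem hu i) hB)

lemma support_tower_monomial [DecidableEq σ] [Nontrivial R] (d : σ →₀ ℕ) {B : MvPolynomial σ R}
    (hB : B ∈ nonnegCoeffs σ R) (m : ℕ) :
    (tower (monomial d 1) B m).support =
      insert (m • d)
        ((Finset.range m).biUnion fun i => B.support.map (addLeftEmbedding (i • d))) := by
  classical
  have hmono : ∀ k, monomial d (1 : R) ^ k = monomial (k • d) 1 := fun k => by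
    rw [monomial_pow, one_pow]
  have hd := monomial_mem_nonnegCoeffs (R := R) d zero_le_one
  rw [tower, support_add_of_mem_nonnegCoeffs (pow_mem hd m)
      (sum_mem fun i _ => mul_mem (pow_mem hd i) hB),
    support_sum_of_mem_nonnegCoeffs _ fun i _ => mul_mem (pow_mem hd i) hB, hmono,
    support_monomial, if_neg one_ne_zero, Finset.insert_eq]
  simp only [hmono, support_monomial_one_mul]

end Tower

section Exponents

def tripleExp (a b c : ℕ) : Fin 3 →₀ ℕ :=
  Finsupp.single 0 a + Finsupp.single 1 b + Finsupp.single 2 c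

@[simp] lemma tripleExp_apply_zero (a b c : ℕ) : tripleExp a b c 0 = a := by simp [tripleExp]
@[simp] lemma tripleExp_apply_one (a b c : ℕ) : tripleExp a b c 1 = b := by simp [tripleExp]
@[simp] lemma tripleExp_apply_two (a b c : ℕ) : tripleExp a b c 2 = c := by simp [tripleExp]

lemma tripleExp_eq (α : Fin 3 →₀ ℕ) : tripleExp (α 0) (α 1) (α 2) = α := by
  ext i; fin_cases i <;> simp

lemma Finsupp.ext_iff_fin_three {α β : Fin 3 →₀ ℕ} :
    α = β ↔ α 0 = β 0 ∧ α 1 = β 1 ∧ α 2 = β 2 := by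
  refine ⟨by rintro rfl; simp, fun ⟨h0, h1, h2⟩ => ?_⟩
  rw [← tripleExp_eq α, ← tripleExp_eq β, h0, h1, h2]

def layer (a k : ℕ) : Finset (Fin 3 →₀ ℕ) :=
  (antidiagonal k).image fun bc => tripleExp a bc.1 bc.2

lemma mem_layer {a k : ℕ} {α : Fin 3 →₀ ℕ} : α ∈ layer a k ↔ α 0 = a ∧ α 1 + α 2 = k := by
  simp only [layer, Finset.mem_image, Finset.HasAntidiagonal.mem_antidiagonal, Prod.exists]
  constructor
  · rintro ⟨b, c, rfl, rfl⟩
    simp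
  · rintro ⟨rfl, rfl⟩
    exact ⟨α 1, α 2, rfl, tripleExp_eq α⟩

lemma card_layer (a k : ℕ) : (layer a k).card = k + 1 := by
  rw [layer, Finset.card_image_of_injective, Finset.Nat.card_antidiagonal]
  intro bc bc' h
  have h1 := DFunLike.congr_fun h 1
  have h2 := DFunLike.congr_fun h 2
  simp only [tripleExp_apply_one, tripleExp_apply_two] at h1 h2
  exact Prod.ext h1 h2

def weightSet (n : ℕ) : Finset (Fin 3 →₀ ℕ) :=
  (Finset.range (n / 2 + 1)).biUnion fun k => layer (n - 2 * k) k

lemma mem_weightSet {n : ℕ} {α : Fin 3 →₀ ℕ} :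
    α ∈ weightSet n ↔ α 0 + 2 * (α 1 + α 2) = n := by
  simp only [weightSet, Finset.mem_biUnion, Finset.mem_range, mem_layer]
  constructor
  · rintro ⟨k, hk, h0, rfl⟩
    omega
  · intro h
    exact ⟨α 1 + α 2, by omega, by omega, rfl⟩

lemma card_weightSet (n : ℕ) :
    (weightSet n).card = ∑ k ∈ Finset.range (n / 2 + 1), (k + 1) := by
  rw [weightSet, Finset.card_biUnion]
  · simp only [card_layer]
  · intro k _ l _ hkl
    refine Finset.disjoint_left.2 fun α hk hl => hkl ?_
    rw [mem_layer] at hk hl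
    omega

lemma card_weightSet_of_odd {n : ℕ} (hn : Odd n) :
    (weightSet n).card = (n + 1) * (n + 3) / 8 := by
  obtain ⟨s, rfl⟩ := hn
  have gauss := Finset.sum_range_id_mul_two (s + 2)
  rw [Finset.sum_range_succ', add_zero, show s + 2 - 1 = s + 1 by omega] at gauss
  rw [card_weightSet, show (2 * s + 1) / 2 + 1 = s + 1 by omega]
  refine (Nat.div_eq_of_eq_mul_left (by norm_num) ?_).symm
  linarith

end Exponents

section Lucas

lemma X_one_add_X_two_mem_nonnegCoeffs :
    (X 1 + X 2 : MvPolynomial (Fin 3) ℝ) ∈ nonnegCoeffs (Fin 3) ℝ :=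
  add_mem (X_mem_nonnegCoeffs 1) (X_mem_nonnegCoeffs 2)

/-- `lucas n = V_n(x₁, x₂ + x₃)` for the Lucas polynomials `V_n(x, y)`, so that
`f_{p,2}(x, y) = V_p(x, y) + y^p`. -/
def lucas : ℕ → MvPolynomial (Fin 3) ℝ
  | 0 => 2
  | 1 => X 0
  | n + 2 => X 0 * lucas (n + 1) + (X 1 + X 2) * lucas n

lemma lucas_mem_nonnegCoeffs : ∀ n, lucas n ∈ nonnegCoeffs (Fin 3) ℝ
  | 0 => ofNat_mem _ 2
  | 1 => X_mem_nonnegCoeffs 0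
  | n + 2 => add_mem (mul_mem (X_mem_nonnegCoeffs 0) (lucas_mem_nonnegCoeffs (n + 1)))
      (mul_mem X_one_add_X_two_mem_nonnegCoeffs (lucas_mem_nonnegCoeffs n))

lemma eval_lucas {v : Fin 3 → ℝ} (hv : v 0 + v 1 + v 2 = 1) :
    ∀ n, eval v (lucas n) = 1 + (v 0 - 1) ^ n
  | 0 => by norm_num [lucas]
  | 1 => by simp [lucas]
  | n + 2 => by
    simp only [lucas, map_add, map_mul, eval_X, eval_lucas hv n, eval_lucas hv (n + 1)]
    rw [show v 1 + v 2 = 1 - v 0 by linarith]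
    ring

lemma support_lucas : ∀ n, (lucas n).support = weightSet n
  | 0 => by
    ext α
    rw [mem_weightSet, lucas, show (2 : MvPolynomial (Fin 3) ℝ) = monomial 0 2 from rfl,
      support_monomial, if_neg two_ne_zero, Finset.mem_singleton, Finsupp.ext_iff_fin_three]
    simp
  | 1 => by
    ext α
    rw [mem_weightSet, lucas, support_X, Finset.mem_singleton, Finsupp.ext_iff_fin_three]
    simp only [Finsupp.single_eq_same, ne_eq, one_ne_zero, not_false_eq_true,
      Finsupp.single_eq_of_ne, Fin.reduceEq]
    omega
  | n + 2 => by
    ext α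
    rw [lucas, support_add_of_mem_nonnegCoeffs
      (mul_mem (X_mem_nonnegCoeffs 0) (lucas_mem_nonnegCoeffs _))
      (mul_mem X_one_add_X_two_mem_nonnegCoeffs (lucas_mem_nonnegCoeffs _)),
      Finset.mem_union, mem_support_X_mul_iff,
      mem_support_X_add_X_mul_iff (lucas_mem_nonnegCoeffs _)]
    simp only [support_lucas, mem_weightSet, Finsupp.coe_tsub, Pi.sub_apply, ne_eq,
      Finsupp.single_eq_same, Finsupp.single_eq_of_ne, Fin.reduceEq, not_false_eq_true, tsub_zero]
    omega

lemma support_X_one_add_X_two_pow :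
    ∀ n, ((X 1 + X 2 : MvPolynomial (Fin 3) ℝ) ^ n).support = layer 0 n
  | 0 => by
    ext α
    simp [mem_layer, Finsupp.ext_iff_fin_three]
  | n + 1 => by
    ext α
    rw [pow_succ', mem_support_X_add_X_mul_iff (pow_mem X_one_add_X_two_mem_nonnegCoeffs n)]
    simp only [support_X_one_add_X_two_pow n, mem_layer, Finsupp.coe_tsub, Pi.sub_apply, ne_eq,
      Finsupp.single_eq_same, Finsupp.single_eq_of_ne, Fin.reduceEq, not_false_eq_true, tsub_zero]
    omega

lemma coeff_single_zero_lucas : ∀ n, coeff (Finsupp.single 0 (n + 1)) (lucas (n + 1)) = 1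
  | 0 => by simp [lucas]
  | n + 1 => by
    have hw : coeff (Finsupp.single 0 (n + 2)) ((X 1 + X 2) * lucas n) = 0 := by
      rw [← notMem_support_iff, mem_support_X_add_X_mul_iff (lucas_mem_nonnegCoeffs n)]
      simp
    rw [lucas, coeff_add, hw, add_zero, ← add_comm 1, Finsupp.single_add, coeff_X_mul,
      coeff_single_zero_lucas n]

end Lucas

section Block

/-- `block p = f_{p,2}(x₁, x₂ + x₃) - x₁^p`. -/
def block (p : ℕ) : MvPolynomial (Fin 3) ℝ := lucas p - X 0 ^ p + (X 1 + X 2) ^ p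

variable {p : ℕ}

lemma X_zero_pow_eq_monomial_coeff_lucas (hp : 0 < p) :
    (X 0 ^ p : MvPolynomial (Fin 3) ℝ) =
      monomial (Finsupp.single 0 p) (coeff (Finsupp.single 0 p) (lucas p)) := by
  obtain ⟨n, rfl⟩ := Nat.exists_eq_add_of_lt hp
  rw [zero_add, coeff_single_zero_lucas, X_pow_eq_monomial]

lemma block_mem_nonnegCoeffs (hp : 0 < p) : block p ∈ nonnegCoeffs (Fin 3) ℝ := by
  rw [block, X_zero_pow_eq_monomial_coeff_lucas hp]
  exact add_mem (sub_monomial_coeff_mem_nonnegCoeffs _ _ (lucas_mem_nonnegCoeffs p))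
    (pow_mem X_one_add_X_two_mem_nonnegCoeffs p)

lemma eval_block (hp : Odd p) {v : Fin 3 → ℝ} (hv : v 0 + v 1 + v 2 = 1) :
    eval v (block p) = 1 - v 0 ^ p := by
  simp only [block, map_add, map_sub, map_pow, eval_X, eval_lucas hv]
  rw [show v 1 + v 2 = -(v 0 - 1) by linarith, hp.neg_pow]
  ring

lemma support_block (hp : 0 < p) :
    (block p).support = (weightSet p).erase (Finsupp.single 0 p) ∪ layer 0 p := by
  rw [block, X_zero_pow_eq_monomial_coeff_lucas hp, support_add_of_mem_nonnegCoeffs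
    (sub_monomial_coeff_mem_nonnegCoeffs _ _ (lucas_mem_nonnegCoeffs p))
    (pow_mem X_one_add_X_two_mem_nonnegCoeffs p),
    support_sub_monomial_coeff, support_lucas, support_X_one_add_X_two_pow]

lemma mem_support_block (hp : 0 < p) {α : Fin 3 →₀ ℕ} :
    α ∈ (block p).support ↔
      α 0 + 2 * (α 1 + α 2) = p ∧ α 1 + α 2 ≠ 0 ∨ α 0 = 0 ∧ α 1 + α 2 = p := by
  simp only [support_block hp, Finset.mem_union, Finset.mem_erase, mem_weightSet, mem_layer,
    ne_eq, Finsupp.ext_iff_fin_three]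
  simp only [Finsupp.single_eq_same, ne_eq, one_ne_zero, not_false_eq_true,
    Finsupp.single_eq_of_ne, Fin.reduceEq, not_and, Nat.add_eq_zero_iff]
  omega

lemma card_support_block (hp : Odd p) :
    (block p).support.card = (p + 1) * (p + 3) / 8 + p := by
  have hp0 := hp.pos
  have hdisj : Disjoint ((weightSet p).erase (Finsupp.single 0 p)) (layer 0 p) :=
    Finset.disjoint_left.2 fun α h₁ h₂ => by
      rw [Finset.mem_erase, mem_weightSet] at h₁
      rw [mem_layer] at h₂
      omega
  have hpos : 1 ≤ (p + 1) * (p + 3) / 8 := (Nat.one_le_div_iff (by norm_num)).2 (by nlinarith)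
  rw [support_block hp0, Finset.card_union_of_disjoint hdisj,
    Finset.card_erase_of_mem (by simp [mem_weightSet]), card_weightSet_of_odd hp, card_layer]
  omega

end Block

section TowerMean
variable {σ R : Type*} [Field R]

def towerMean (u B : MvPolynomial σ R) (T : Finset ℕ) : MvPolynomial σ R :=
  (T.card : R)⁻¹ • ∑ m ∈ T, tower u B m

lemma eval_towerMean [CharZero R] {u B : MvPolynomial σ R} {v : σ → R}
    (h : eval v B = 1 - eval v u) {T : Finset ℕ} (hT : T.Nonempty) :
    eval v (towerMean u B T) = 1 := by
  simp only [towerMean, smul_eval, map_sum, eval_tower h, Finset.sum_const, nsmul_eq_mul, mul_one]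
  exact inv_mul_cancel₀ (by exact_mod_cast hT.card_pos.ne')

variable [LinearOrder R] [IsStrictOrderedRing R]

lemma towerMean_mem_nonnegCoeffs {u B : MvPolynomial σ R} (hu : u ∈ nonnegCoeffs σ R)
    (hB : B ∈ nonnegCoeffs σ R) (T : Finset ℕ) : towerMean u B T ∈ nonnegCoeffs σ R := by
  have hsum := sum_mem fun m (_ : m ∈ T) => tower_mem_nonnegCoeffs hu hB m
  refine fun α => ?_
  rw [towerMean, coeff_smul, smul_eq_mul]
  exact mul_nonneg (by positivity) (hsum α)

lemma support_towerMean [DecidableEq σ] (d : σ →₀ ℕ) {B : MvPolynomial σ R}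
    (hB : B ∈ nonnegCoeffs σ R) {T : Finset ℕ} {n : ℕ} (hn : n ∈ T) (hT : ∀ m ∈ T, m ≤ n) :
    (towerMean (monomial d 1) B T).support =
      T.image (· • d) ∪
        (Finset.range n).biUnion fun i => B.support.map (addLeftEmbedding (i • d)) := by
  have hT0 : (T.card : R)⁻¹ ≠ 0 :=
    inv_ne_zero (by exact_mod_cast (Finset.card_pos.2 ⟨n, hn⟩).ne')
  rw [towerMean, support_smul_eq hT0, support_sum_of_mem_nonnegCoeffs _ fun m _ =>
    tower_mem_nonnegCoeffs (monomial_mem_nonnegCoeffs d zero_le_one) hB m]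
  ext α
  simp only [support_tower_monomial d hB, Finset.mem_biUnion, Finset.mem_insert, Finset.mem_union,
    Finset.mem_image, Finset.mem_range]
  constructor
  · rintro ⟨m, hm, rfl | ⟨i, hi, hα⟩⟩
    · exact Or.inl ⟨m, hm, rfl⟩
    · exact Or.inr ⟨i, (hi.trans_le (hT m hm)), hα⟩
  · rintro (⟨m, hm, rfl⟩ | ⟨i, hi, hα⟩)
    · exact ⟨m, hm, Or.inl rfl⟩
    · exact ⟨n, hn, Or.inr ⟨i, hi, hα⟩⟩

end TowerMean

section Rank
variable {p : ℕ} {B : MvPolynomial (Fin 3) ℝ} {T : Finset ℕ} {n : ℕ}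

lemma card_support_towerMean (hp : 0 < p) (hB : B ∈ nonnegCoeffs (Fin 3) ℝ)
    (hBsupp : ∀ β ∈ B.support, β 0 < p ∧ β 1 + β 2 ≠ 0) (hn : n ∈ T) (hT : ∀ m ∈ T, m ≤ n) :
    (towerMean (monomial (Finsupp.single 0 p) 1) B T).support.card =
      T.card + n * B.support.card := by
  have hinj : Function.Injective fun m : ℕ => m • Finsupp.single (0 : Fin 3) p := fun m m' h => by
    have := DFunLike.congr_fun h 0
    simpa [hp.ne'] using this
  have hdisj : Disjoint (T.image (· • Finsupp.single (0 : Fin 3) p))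
      ((Finset.range n).biUnion fun i =>
        B.support.map (addLeftEmbedding (i • Finsupp.single 0 p))) := by
    refine Finset.disjoint_left.2 fun α hα hα' => ?_
    obtain ⟨m, -, rfl⟩ := Finset.mem_image.1 hα
    obtain ⟨i, -, hi⟩ := Finset.mem_biUnion.1 hα'
    obtain ⟨β, hβ, he⟩ := Finset.mem_map.1 hi
    have h1 : β 1 = 0 := by simpa using DFunLike.congr_fun he 1
    have h2 : β 2 = 0 := by simpa using DFunLike.congr_fun he 2
    exact (hBsupp β hβ).2 (by omega)
  have quotient_eq : ∀ k {γ : Fin 3 →₀ ℕ}, γ ∈ B.support → (k * p + γ 0) / p = k :=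
    fun k γ hγ => by
      rw [add_comm, Nat.add_mul_div_right _ _ hp, Nat.div_eq_of_lt (hBsupp γ hγ).1, zero_add]
  have hpair : (Finset.range n : Set ℕ).PairwiseDisjoint
      fun i => B.support.map (addLeftEmbedding (i • Finsupp.single (0 : Fin 3) p)) := by
    intro i _ j _ hij
    refine Finset.disjoint_left.2 fun α hα hα' => hij ?_
    obtain ⟨β, hβ, rfl⟩ := Finset.mem_map.1 hα
    obtain ⟨β', hβ', he⟩ := Finset.mem_map.1 hα'
    have h0 : j * p + β' 0 = i * p + β 0 := by simpa using DFunLike.congr_fun he 0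
    rw [← quotient_eq i hβ, ← quotient_eq j hβ', h0]
  rw [support_towerMean _ hB hn hT, Finset.card_union_of_disjoint hdisj,
    Finset.card_image_of_injective _ hinj, Finset.card_biUnion hpair]
  simp

lemma dvd_of_mem_support_towerMean (hB : B ∈ nonnegCoeffs (Fin 3) ℝ)
    (hBdvd : ∀ β ∈ B.support, p ∣ β 0 + 2 * β 1 + 2 * β 2) (hn : n ∈ T) (hT : ∀ m ∈ T, m ≤ n) :
    ∀ α ∈ (towerMean (monomial (Finsupp.single 0 p) 1) B T).support,
      p ∣ α 0 + 2 * α 1 + 2 * α 2 := by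
  rw [support_towerMean _ hB hn hT]
  intro α hα
  rcases Finset.mem_union.1 hα with hα | hα
  · obtain ⟨m, -, rfl⟩ := Finset.mem_image.1 hα
    simp
  · obtain ⟨i, -, hi⟩ := Finset.mem_biUnion.1 hα
    obtain ⟨β, hβ, rfl⟩ := Finset.mem_map.1 hi
    simpa [add_assoc] using dvd_add (dvd_mul_left p i) (hBdvd β hβ)

theorem exists_rank_eq_of_block {p : ℕ} (hp : 0 < p) {B : MvPolynomial (Fin 3) ℝ}
    (hB : B ∈ nonnegCoeffs (Fin 3) ℝ)
    (hBeval : ∀ v : Fin 3 → ℝ, v 0 + v 1 + v 2 = 1 → eval v B = 1 - v 0 ^ p)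
    (hBsupp : ∀ β ∈ B.support, β 0 < p ∧ β 1 + β 2 ≠ 0)
    (hBdvd : ∀ β ∈ B.support, p ∣ β 0 + 2 * β 1 + 2 * β 2) {N : ℕ}
    (hN : B.support.card ^ 2 < N) :
    ∃ g : MvPolynomial (Fin 3) ℝ,
      (∀ α, 0 ≤ g.coeff α) ∧
      (∀ x₁ x₂ x₃ : ℝ, x₁ + x₂ + x₃ = 1 → eval ![x₁, x₂, x₃] g = 1) ∧
      (∀ α ∈ g.support, p ∣ α 0 + 2 * α 1 + 2 * α 2) ∧
      g.support.card = N := by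
  have hr : 0 < B.support.card := by
    refine Finset.card_pos.2 (Finset.nonempty_iff_ne_empty.2 fun h => ?_)
    have := hBeval ![0, 1, 0] (by simp)
    simp [support_eq_empty.1 h, hp.ne'] at this
  obtain ⟨n, b, hb, hnb⟩ : ∃ n b, b < B.support.card ∧ n * B.support.card + b + 1 = N :=
    ⟨(N - 1) / _, (N - 1) % _, Nat.mod_lt _ hr, by rw [mul_comm, Nat.div_add_mod]; omega⟩
  have hrn : B.support.card ≤ n := by nlinarith
  set T := insert n (Finset.range b)
  have hn : n ∈ T := Finset.mem_insert_self _ _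
  have hT : ∀ m ∈ T, m ≤ n := by
    simp only [T, Finset.forall_mem_insert, Finset.mem_range]
    exact ⟨le_rfl, fun m hm => by omega⟩
  have hTcard : T.card = b + 1 := by
    rw [Finset.card_insert_of_notMem (by rw [Finset.mem_range]; omega), Finset.card_range]
  have hu : (X 0 ^ p : MvPolynomial (Fin 3) ℝ) = monomial (Finsupp.single 0 p) 1 :=
    X_pow_eq_monomial
  refine ⟨towerMean (X 0 ^ p) B T,
    towerMean_mem_nonnegCoeffs (pow_mem (X_mem_nonnegCoeffs 0) p) hB T,
    fun x₁ x₂ x₃ h =>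
      eval_towerMean (by simpa using hBeval ![x₁, x₂, x₃] (by simpa using h)) ⟨n, hn⟩,
    hu ▸ dvd_of_mem_support_towerMean hB hBdvd hn hT, ?_⟩
  rw [hu, card_support_towerMean hp hB hBsupp hn hT, hTcard, ← hnb]
  ring

end Rank

end

theorem stmt_15_general (p : ℕ) (hodd : Odd p) (N : ℕ)
    (hN : ((p + 1) * (p + 3) / 8 + p + 1) ^ 2 - 2 * ((p + 1) * (p + 3) / 8 + p + 1) + 2 ≤ N) :
    ∃ g : MvPolynomial (Fin 3) ℝ,
      (∀ α, 0 ≤ g.coeff α) ∧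
      (∀ x₁ x₂ x₃ : ℝ, x₁ + x₂ + x₃ = 1 → eval ![x₁, x₂, x₃] g = 1) ∧
      (∀ α ∈ g.support, p ∣ α 0 + 2 * α 1 + 2 * α 2) ∧
      g.support.card = N := by
  have hp := hodd.pos
  refine exists_rank_eq_of_block hp (block_mem_nonnegCoeffs hp) (fun v hv => eval_block hodd hv)
    (fun β hβ => ?_) (fun β hβ => ?_) ?_
  · have := (mem_support_block hp).1 hβ
    omega
  · rcases (mem_support_block hp).1 hβ with ⟨h, -⟩ | ⟨h₀, h⟩
    · exact ⟨1, by omega⟩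
    · exact ⟨2, by omega⟩
  · rw [card_support_block hodd]
    generalize (p + 1) * (p + 3) / 8 + p = r at hN ⊢
    have : (r + 1) ^ 2 = r ^ 2 + 2 * r + 1 := by ring
    omega

/-- Gap termination for `⟨ωI₁ ⊕ ω²I₂⟩`, `ω` a primitive `p`-th root of unity
(`p` odd): with `M = (p+1)(p+3)/8 + p + 1` the rank of `f_{p,2}(x₁, x₂+x₃)`, every
`N ≥ M² − 2M + 2` is realized as the rank of an invariant polynomial with
non-negative coefficients equal to `1` on the hyperplane `x₁ + x₂ + x₃ = 1`. -/
theorem stmt_15 (p : ℕ) (hp : 3 ≤ p) (hodd : Odd p) (N : ℕ)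
    (hN : ((p + 1) * (p + 3) / 8 + p + 1) ^ 2 - 2 * ((p + 1) * (p + 3) / 8 + p + 1) + 2 ≤ N) :
    ∃ g : MvPolynomial (Fin 3) ℝ,
      (∀ α, 0 ≤ g.coeff α) ∧
      (∀ x₁ x₂ x₃ : ℝ, x₁ + x₂ + x₃ = 1 → eval ![x₁, x₂, x₃] g = 1) ∧
      (∀ α ∈ g.support, p ∣ α 0 + 2 * α 1 + 2 * α 2) ∧
      g.support.card = N :=
  stmt_15_general p hodd N hN
end
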